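/- Let u : N → ℝ be smooth (C^∞), x ∈ N a noncharacteristic point, and h : N → ℝ a C² function. For L > 0 define the fiber Laplacian Δ_F h := −ē₁(ē₁(h)) − ē₂(ē₂(h)) + g_L(∇^L_{ē₁}ē₁, ē₂)·ē₂(h) + g_L(∇^L_{ē₂}ē₂, ē₁)·ē₁(h) (all quantities depending on L through ē₂, r̄_L, l_L). Then, as L → ∞ along (0,∞), (Δ_F h)(x) tends to −ē₁(ē₁(h))(x) − (2τ·X₃u(x)/l(x))·ē₁(h)(x). -/

import Mathlib

/- Common setup for the BCV spaces (twisted BCV paper formalization). -/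

noncomputable section

open scoped BigOperators

/-- A point of `ℝ³`. -/
abbrev Pt : Type := Fin 3 → ℝ

/-- A vector field on (an open subset of) `ℝ³`, viewed as a map `ℝ³ → ℝ³`. -/
abbrev VF : Type := Pt → Pt

/-- `μ(x) = 1 + (λ/4)(x₁² + x₂²)`. -/
def mu (lam : ℝ) (x : Pt) : ℝ := 1 + lam / 4 * ((x 0) ^ 2 + (x 1) ^ 2)

/-- The frame field `X₁`. -/
def X1 (lam tau : ℝ) : VF := fun x => ![mu lam x, 0, -tau * x 1]

/-- The frame field `X₂`. -/
def X2 (lam tau : ℝ) : VF := fun x => ![0, mu lam x, tau * x 0]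

/-- The frame field `X₃`. -/
def X3 : VF := fun _ => ![0, 0, 1]

/-- The frame as a family indexed by `Fin 3`. -/
def Xf (lam tau : ℝ) : Fin 3 → VF := ![X1 lam tau, X2 lam tau, X3]

/-- Lie bracket of vector fields: `[V,W](x) = DW(x)(V(x)) − DV(x)(W(x))`. -/
def bracket (V W : VF) (x : Pt) : Pt := fderiv ℝ W x (V x) - fderiv ℝ V x (W x)

/-- The coframe `ω₁, ω₂, ω₃` evaluated at `x` on the tangent vector `v`. -/
def omf (lam tau : ℝ) (i : Fin 3) (x v : Pt) : ℝ :=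
  ![v 0 / mu lam x, v 1 / mu lam x,
    v 2 + tau * (x 1 * v 0 - x 0 * v 1) / mu lam x] i

/-- The metric `g_L(x)(v,w) = ω₁(v)ω₁(w) + ω₂(v)ω₂(w) + L·ω₃(v)ω₃(w)`. -/
def gL (lam tau L : ℝ) (x v w : Pt) : ℝ :=
  omf lam tau 0 x v * omf lam tau 0 x w + omf lam tau 1 x v * omf lam tau 1 x w
    + L * (omf lam tau 2 x v * omf lam tau 2 x w)

/-- The directional derivative `X(f)(x) = Df(x)(X(x))` of `f` along the vector field `X`. -/
def dd (X : VF) (f : Pt → ℝ) (x : Pt) : ℝ := fderiv ℝ f x (X x)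

/-- The connection table `(∇^L_{Xᵢ}Xⱼ)(x)` on the frame. -/
def nablaF (lam tau L : ℝ) (i j : Fin 3) (x : Pt) : Pt :=
  ![![(lam / 2 * x 1) • X2 lam tau x,
      (-(lam / 2) * x 1) • X1 lam tau x + tau • X3 x,
      (-(tau * L)) • X2 lam tau x],
    ![(-(lam / 2) * x 0) • X2 lam tau x - tau • X3 x,
      (lam / 2 * x 0) • X1 lam tau x,
      (tau * L) • X1 lam tau x],
    ![(-(tau * L)) • X2 lam tau x,
      (tau * L) • X1 lam tau x,
      (0 : Pt)]] i j

/-- The connection `∇^L` extended to general vector fields `V = Σᵢ vᵢXᵢ`, `W = Σⱼ wⱼXⱼ`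
(with `vᵢ = ωᵢ(V)`, `wⱼ = ωⱼ(W)`):
`∇^L_V W = Σᵢⱼ vᵢ·(Xᵢ(wⱼ)·Xⱼ + wⱼ·∇^L_{Xᵢ}Xⱼ)`. -/
def nabla (lam tau L : ℝ) (V W : VF) (x : Pt) : Pt :=
  ∑ i : Fin 3, ∑ j : Fin 3,
    omf lam tau i x (V x) •
      (dd (Xf lam tau i) (fun y => omf lam tau j y (W y)) x • Xf lam tau j x
        + omf lam tau j x (W x) • nablaF lam tau L i j x)

/-- The curvature `R^L(V,W)Z = ∇^L_V∇^L_W Z − ∇^L_W∇^L_V Z − ∇^L_{[V,W]}Z`. -/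
def RL (lam tau L : ℝ) (V W Z : VF) (x : Pt) : Pt :=
  nabla lam tau L V (nabla lam tau L W Z) x - nabla lam tau L W (nabla lam tau L V Z) x
    - nabla lam tau L (bracket V W) Z x

/-- `p = X₁u`. -/
def pf (lam tau : ℝ) (u : Pt → ℝ) (x : Pt) : ℝ := dd (X1 lam tau) u x

/-- `q = X₂u`. -/
def qf (lam tau : ℝ) (u : Pt → ℝ) (x : Pt) : ℝ := dd (X2 lam tau) u x

/-- `X₃u`. -/
def X3u (u : Pt → ℝ) (x : Pt) : ℝ := dd X3 u x

/-- `l = √(p² + q²)`. -/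
def lf (lam tau : ℝ) (u : Pt → ℝ) (x : Pt) : ℝ :=
  Real.sqrt (pf lam tau u x ^ 2 + qf lam tau u x ^ 2)

/-- `X̃₃ = L^{-1/2} X₃`. -/
def X3t (L : ℝ) : VF := fun x => (Real.sqrt L)⁻¹ • X3 x

/-- `r = X̃₃u = L^{-1/2} X₃u`. -/
def rf (L : ℝ) (u : Pt → ℝ) (x : Pt) : ℝ := (Real.sqrt L)⁻¹ * X3u u x

/-- `l_L = √(p² + q² + r²)`. -/
def lL (lam tau L : ℝ) (u : Pt → ℝ) (x : Pt) : ℝ :=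
  Real.sqrt (pf lam tau u x ^ 2 + qf lam tau u x ^ 2 + rf L u x ^ 2)

/-- `p̄ = p/l`. -/
def pbar (lam tau : ℝ) (u : Pt → ℝ) (x : Pt) : ℝ := pf lam tau u x / lf lam tau u x

/-- `q̄ = q/l`. -/
def qbar (lam tau : ℝ) (u : Pt → ℝ) (x : Pt) : ℝ := qf lam tau u x / lf lam tau u x

/-- `p̄_L = p/l_L`. -/
def pbarL (lam tau L : ℝ) (u : Pt → ℝ) (x : Pt) : ℝ := pf lam tau u x / lL lam tau L u x

/-- `q̄_L = q/l_L`. -/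
def qbarL (lam tau L : ℝ) (u : Pt → ℝ) (x : Pt) : ℝ := qf lam tau u x / lL lam tau L u x

/-- `r̄_L = r/l_L`. -/
def rbarL (lam tau L : ℝ) (u : Pt → ℝ) (x : Pt) : ℝ := rf L u x / lL lam tau L u x

/-- The Riemannian unit normal `ν_L = p̄_L X₁ + q̄_L X₂ + r̄_L X̃₃`. -/
def nuL (lam tau L : ℝ) (u : Pt → ℝ) : VF := fun x =>
  pbarL lam tau L u x • X1 lam tau x + qbarL lam tau L u x • X2 lam tau x
    + rbarL lam tau L u x • X3t L x

/-- The tangent frame field `ē₁ = q̄X₁ − p̄X₂`. -/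
def e1 (lam tau : ℝ) (u : Pt → ℝ) : VF := fun x =>
  qbar lam tau u x • X1 lam tau x - pbar lam tau u x • X2 lam tau x

/-- The tangent frame field `ē₂ = r̄_L p̄ X₁ + r̄_L q̄ X₂ − (l/l_L)X̃₃`. -/
def e2 (lam tau L : ℝ) (u : Pt → ℝ) : VF := fun x =>
  (rbarL lam tau L u x * pbar lam tau u x) • X1 lam tau x
    + (rbarL lam tau L u x * qbar lam tau u x) • X2 lam tau x
    - (lf lam tau u x / lL lam tau L u x) • X3t L x

/-! Put `s = L^{-1/2}`. Then `ē₂ = s·E_s` for a vector field `E_s` (`e2Scaled s`) that is jointly smooth in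
`(s, y)` near `(0, x)` because `l(x) ≠ 0`, and `∇^L = ∇^0 + L·T` for a tensor `T` (`nablaSlope`) that only sees
`X₃`-components. Since `ē₁` is horizontal, so is `∇_{ē₁}ē₁`, and with `s²L = 1` the fiber
Laplacian becomes
`−ē₁ē₁h − s²·E_sE_sh + s²·g_0(∇^0_{ē₁}ē₁, E_s)·E_sh + g_0(s²∇^0_{E_s}E_s + T(E_s, E_s), ē₁)·ē₁h`,
which is continuous in `s` at `0`. Finally `E_0 = (X₃u/l²)(pX₁ + qX₂) − X₃`, so
`T(E_0, E_0) = −(2τX₃u/l)·ē₁`. -/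

open Filter Topology

section ParametricCalculus

variable {P E F : Type*} [NormedAddCommGroup P] [NormedSpace ℝ P] [NormedAddCommGroup E]
  [NormedSpace ℝ E] [NormedAddCommGroup F] [NormedSpace ℝ F]

theorem ContDiffAt.continuousAt_fderiv_apply {f : P → E → F} {s₀ : P} {x : E}
    (hf : ContDiffAt ℝ 1 (Function.uncurry f) (s₀, x)) {v : P → E} (hv : ContinuousAt v s₀) :
    ContinuousAt (fun s => fderiv ℝ (f s) x (v s)) s₀ :=
  (hf.fderiv (m := 0) (g := fun _ => x) contDiffAt_const le_rfl).continuousAt.clm_apply hv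

end ParametricCalculus

theorem dd_const_smul (c : ℝ) (V : VF) (f : Pt → ℝ) :
    dd (fun y => c • V y) f = fun y => c * dd V f y := by
  funext y
  simp [dd]

theorem dd_const_mul (c : ℝ) (V : VF) (f : Pt → ℝ) :
    dd V (fun y => c * f y) = fun y => c * dd V f y := by
  funext y
  change fderiv ℝ (c • f) y (V y) = _
  rw [fderiv_const_smul_field]
  rfl

theorem contDiff_dd {n : ℕ} {X : VF} {f : Pt → ℝ} (hf : ContDiff ℝ (n + 1) f)
    (hX : ContDiff ℝ n X) : ContDiff ℝ n (dd X f) :=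
  (hf.fderiv_right le_rfl).clm_apply hX

theorem continuousAt_dd_dd {h : Pt → ℝ} (hh : ContDiff ℝ 2 h) {V : ℝ → VF} {s₀ : ℝ} {x : Pt}
    (hV : ContDiffAt ℝ 1 (Function.uncurry V) (s₀, x)) :
    ContinuousAt (fun s => dd (V s) (dd (V s) h) x) s₀ := by
  have hVh : ContDiffAt ℝ 1 (Function.uncurry fun s y => dd (V s) h y) (s₀, x) :=
    ((hh.fderiv_right (m := 1) le_rfl).contDiffAt.comp _ contDiffAt_snd).clm_apply hV
  exact hVh.continuousAt_fderiv_apply (hV.continuousAt.comp (f := fun s => (s, x)) (by fun_prop))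

section BCV

variable {lam tau : ℝ} {u : Pt → ℝ}

@[fun_prop]
theorem contDiff_mu {n : WithTop ℕ∞} : ContDiff ℝ n (mu lam) := by
  unfold mu; fun_prop

theorem contDiffAt_omf {n : WithTop ℕ∞} (i : Fin 3) {x : Pt} (hx : mu lam x ≠ 0) (v : Pt) :
    ContDiffAt ℝ n (fun p : Pt × Pt => omf lam tau i p.1 p.2) (x, v) := by
  fin_cases i <;> simp only [omf, Fin.zero_eta, Fin.mk_one, Fin.reduceFinMk, Matrix.cons_val] <;>
    fun_prop (disch := exact hx)

theorem continuous_omf (i : Fin 3) (x : Pt) : Continuous (omf lam tau i x) := by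
  change Continuous fun v => omf lam tau i x v
  fin_cases i <;> simp only [omf, Fin.zero_eta, Fin.mk_one, Fin.reduceFinMk, Matrix.cons_val] <;>
    fun_prop

theorem omf_add (i : Fin 3) (y v w : Pt) :
    omf lam tau i y (v + w) = omf lam tau i y v + omf lam tau i y w := by
  fin_cases i <;> simp [omf] <;> ring

theorem omf_smul (i : Fin 3) (y : Pt) (c : ℝ) (v : Pt) :
    omf lam tau i y (c • v) = c * omf lam tau i y v := by
  fin_cases i <;> simp [omf] <;> ring

theorem omf_sub (i : Fin 3) (y v w : Pt) :
    omf lam tau i y (v - w) = omf lam tau i y v - omf lam tau i y w := by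
  fin_cases i <;> simp [omf] <;> ring

theorem omf_X1 (i : Fin 3) {y : Pt} (hy : mu lam y ≠ 0) :
    omf lam tau i y (X1 lam tau y) = ![1, 0, 0] i := by
  fin_cases i <;> simp [omf, X1, hy, mul_div_assoc]

theorem omf_X2 (i : Fin 3) {y : Pt} (hy : mu lam y ≠ 0) :
    omf lam tau i y (X2 lam tau y) = ![0, 1, 0] i := by
  fin_cases i <;> simp [omf, X2, hy, neg_div, mul_div_assoc]

theorem omf_X3 (i : Fin 3) (y : Pt) : omf lam tau i y (X3 y) = ![0, 0, 1] i := by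
  fin_cases i <;> simp [omf, X3]

theorem contDiff_X1 {n : WithTop ℕ∞} : ContDiff ℝ n fun y : Pt => X1 lam tau y := by
  refine contDiff_pi.mpr fun i => ?_
  fin_cases i <;> simp only [X1, Fin.zero_eta, Fin.mk_one, Fin.reduceFinMk, Matrix.cons_val] <;>
    fun_prop

theorem contDiff_X2 {n : WithTop ℕ∞} : ContDiff ℝ n fun y : Pt => X2 lam tau y := by
  refine contDiff_pi.mpr fun i => ?_
  fin_cases i <;> simp only [X2, Fin.zero_eta, Fin.mk_one, Fin.reduceFinMk, Matrix.cons_val] <;>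
    fun_prop

def nablaSlope (lam tau : ℝ) (x v w : Pt) : Pt :=
  (tau * (omf lam tau 1 x v * omf lam tau 2 x w + omf lam tau 2 x v * omf lam tau 1 x w)) •
      X1 lam tau x
    - (tau * (omf lam tau 0 x v * omf lam tau 2 x w + omf lam tau 2 x v * omf lam tau 0 x w)) •
      X2 lam tau x

theorem nabla_eq_nabla_zero_add (L : ℝ) (V W : VF) (x : Pt) :
    nabla lam tau L V W x = nabla lam tau 0 V W x + L • nablaSlope lam tau x (V x) (W x) := by
  simp only [nabla, nablaSlope, nablaF, Fin.sum_univ_three, Matrix.cons_val_zero,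
    Matrix.cons_val_one, Matrix.cons_val_two, Matrix.head_cons, Matrix.tail_cons]
  module

theorem nablaSlope_self_of_omf_two_eq_zero {x v : Pt} (hv : omf lam tau 2 x v = 0) :
    nablaSlope lam tau x v v = 0 := by
  simp [nablaSlope, hv]

theorem nabla_const_smul (L c : ℝ) (V W : VF) (x : Pt) :
    nabla lam tau L (fun y => c • V y) (fun y => c • W y) x = c ^ 2 • nabla lam tau L V W x := by
  simp only [nabla, omf_smul, dd_const_mul, Fin.sum_univ_three]
  module

theorem omf_two_nabla_self_of_horizontal (L : ℝ) {V : VF} {x : Pt} (hx : mu lam x ≠ 0)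
    (hV : ∀ᶠ y in 𝓝 x, omf lam tau 2 y (V y) = 0) :
    omf lam tau 2 x (nabla lam tau L V V x) = 0 := by
  have hdd (X : VF) : dd X (fun y => omf lam tau 2 y (V y)) x = 0 := by
    simp [dd, Filter.EventuallyEq.fderiv_eq (f := fun _ => (0 : ℝ)) hV]
  simp only [nabla, Fin.sum_univ_three, omf_add, omf_smul, omf_sub, hdd, hV.self_of_nhds, Xf,
    nablaF, Matrix.cons_val_zero, Matrix.cons_val_one, Matrix.cons_val_two, Matrix.head_cons,
    Matrix.tail_cons, omf_X1 2 hx, omf_X2 2 hx, omf_X3, mul_zero, mul_one, add_zero]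
  ring

theorem continuousAt_nabla (L : ℝ) {V W : ℝ → VF} {s₀ : ℝ} {x : Pt} (hx : mu lam x ≠ 0)
    (hV : ContinuousAt (fun s => V s x) s₀) (hW : ContDiffAt ℝ 1 (Function.uncurry W) (s₀, x)) :
    ContinuousAt (fun s => nabla lam tau L (V s) (W s) x) s₀ := by
  have hWx : ContinuousAt (fun s => W s x) s₀ :=
    hW.continuousAt.comp (f := fun s => (s, x)) (by fun_prop)
  have hω (j : Fin 3) :
      ContDiffAt ℝ 1 (Function.uncurry fun s y => omf lam tau j y (W s y)) (s₀, x) :=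
    (contDiffAt_omf j hx (W s₀ x)).comp (f := fun p : ℝ × Pt => (p.2, W p.1 p.2)) (s₀, x)
      (contDiffAt_snd.prodMk hW)
  refine tendsto_finsetSum _ fun i _ => tendsto_finsetSum _ fun j _ => ?_
  exact ((continuous_omf i x).continuousAt.comp hV).smul
    ((((hω j).continuousAt_fderiv_apply continuousAt_const).smul continuousAt_const).add
      (((continuous_omf j x).continuousAt.comp hWx).smul continuousAt_const))

theorem omf_two_e1 {y : Pt} (hy : mu lam y ≠ 0) : omf lam tau 2 y (e1 lam tau u y) = 0 := by
  simp [e1, omf_sub, omf_smul, omf_X1 2 hy, omf_X2 2 hy]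

theorem nabla_e1_e1_eq_nabla_zero (L : ℝ) {x : Pt} (hx : mu lam x ≠ 0) :
    nabla lam tau L (e1 lam tau u) (e1 lam tau u) x =
      nabla lam tau 0 (e1 lam tau u) (e1 lam tau u) x := by
  rw [nabla_eq_nabla_zero_add, nablaSlope_self_of_omf_two_eq_zero (omf_two_e1 hx), smul_zero,
    add_zero]

theorem omf_two_nabla_e1_e1 (L : ℝ) {x : Pt} (hx : mu lam x ≠ 0) :
    omf lam tau 2 x (nabla lam tau L (e1 lam tau u) (e1 lam tau u) x) = 0 :=
  omf_two_nabla_self_of_horizontal L hx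
    ((contDiff_mu (n := 0)).continuous.continuousAt.eventually_ne hx |>.mono
      fun _ hy => omf_two_e1 hy)

def lLScaled (lam tau : ℝ) (u : Pt → ℝ) (s : ℝ) (y : Pt) : ℝ :=
  √(pf lam tau u y ^ 2 + qf lam tau u y ^ 2 + s ^ 2 * X3u u y ^ 2)

def e2Scaled (lam tau : ℝ) (u : Pt → ℝ) (s : ℝ) : VF := fun y =>
  (X3u u y / (lLScaled lam tau u s y * lf lam tau u y)) •
      (pf lam tau u y • X1 lam tau y + qf lam tau u y • X2 lam tau y)
    - (lf lam tau u y / lLScaled lam tau u s y) • X3 y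

theorem e2_eq_smul_e2Scaled (L : ℝ) :
    e2 lam tau L u = fun y => (√L)⁻¹ • e2Scaled lam tau u (√L)⁻¹ y := by
  funext y
  have hlL : lL lam tau L u y = lLScaled lam tau u (√L)⁻¹ y := by
    simp [lL, lLScaled, rf, mul_pow]
  simp only [e2, e2Scaled, X3t, rbarL, pbar, qbar, rf, hlL, smul_add, smul_sub, smul_smul]
  module

theorem contDiffAt_uncurry_e2Scaled (hu : ContDiff ℝ 2 u) {x : Pt} (hnc : lf lam tau u x ≠ 0)
    (s₀ : ℝ) : ContDiffAt ℝ 1 (Function.uncurry (e2Scaled lam tau u)) (s₀, x) := by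
  have hp : ContDiff ℝ 1 (pf lam tau u) := contDiff_dd hu contDiff_X1
  have hq : ContDiff ℝ 1 (qf lam tau u) := contDiff_dd hu contDiff_X2
  have h3 : ContDiff ℝ 1 (X3u u) := contDiff_dd hu contDiff_const
  have h1 : ContDiff ℝ 1 fun y => X1 lam tau y := contDiff_X1
  have h2 : ContDiff ℝ 1 fun y => X2 lam tau y := contDiff_X2
  have hpq : 0 < pf lam tau u x ^ 2 + qf lam tau u x ^ 2 := Real.sqrt_ne_zero'.mp hnc
  have hl : ContDiffAt ℝ 1 (lf lam tau u) x :=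
    ((hp.pow 2).add (hq.pow 2)).contDiffAt.sqrt hpq.ne'
  have hlL : ContDiffAt ℝ 1 (fun p : ℝ × Pt => lLScaled lam tau u p.1 p.2) (s₀, x) := by
    unfold lLScaled
    exact ContDiffAt.sqrt (by fun_prop) (by positivity)
  have hlL0 : lLScaled lam tau u s₀ x ≠ 0 := (Real.sqrt_pos.mpr (by positivity)).ne'
  unfold e2Scaled Function.uncurry
  simp only [X3]
  fun_prop (disch := first | exact hlL0 | exact mul_ne_zero hlL0 hnc)

def fiberLaplacian (lam tau L : ℝ) (u h : Pt → ℝ) (x : Pt) : ℝ :=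
  -dd (e1 lam tau u) (dd (e1 lam tau u) h) x
    - dd (e2 lam tau L u) (dd (e2 lam tau L u) h) x
    + gL lam tau L x (nabla lam tau L (e1 lam tau u) (e1 lam tau u) x)
        (e2 lam tau L u x) * dd (e2 lam tau L u) h x
    + gL lam tau L x (nabla lam tau L (e2 lam tau L u) (e2 lam tau L u) x)
        (e1 lam tau u x) * dd (e1 lam tau u) h x

def fiberLaplacianScaled (lam tau : ℝ) (u h : Pt → ℝ) (x : Pt) (s : ℝ) : ℝ :=
  -dd (e1 lam tau u) (dd (e1 lam tau u) h) x
    - s ^ 2 * dd (e2Scaled lam tau u s) (dd (e2Scaled lam tau u s) h) x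
    + s ^ 2 * gL lam tau 0 x (nabla lam tau 0 (e1 lam tau u) (e1 lam tau u) x)
        (e2Scaled lam tau u s x) * dd (e2Scaled lam tau u s) h x
    + gL lam tau 0 x (s ^ 2 • nabla lam tau 0 (e2Scaled lam tau u s) (e2Scaled lam tau u s) x
        + nablaSlope lam tau x (e2Scaled lam tau u s x) (e2Scaled lam tau u s x))
        (e1 lam tau u x) * dd (e1 lam tau u) h x

theorem fiberLaplacian_eq_fiberLaplacianScaled {h : Pt → ℝ} {x : Pt} {L : ℝ} (hL : 0 < L)
    (hx : mu lam x ≠ 0) :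
    fiberLaplacian lam tau L u h x = fiberLaplacianScaled lam tau u h x (√L)⁻¹ := by
  set s := (√L)⁻¹
  set E := e2Scaled lam tau u s
  have hsL : s ^ 2 * L = 1 := by simp [s, inv_pow, Real.sq_sqrt hL.le, hL.ne']
  have he2 : e2 lam tau L u = fun y => s • E y := e2_eq_smul_e2Scaled L
  have hnabla : nabla lam tau L (fun y => s • E y) (fun y => s • E y) x
      = s ^ 2 • nabla lam tau 0 E E x + nablaSlope lam tau x (E x) (E x) := by
    rw [nabla_const_smul, nabla_eq_nabla_zero_add, smul_add, smul_smul, hsL, one_smul]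
  simp only [fiberLaplacian, fiberLaplacianScaled, he2, dd_const_smul,
    dd_const_mul, hnabla, nabla_e1_e1_eq_nabla_zero L hx, gL, omf_smul, omf_two_e1 hx,
    omf_two_nabla_e1_e1 0 hx]
  ring

theorem continuous_gL (L : ℝ) (x : Pt) :
    Continuous fun p : Pt × Pt => gL lam tau L x p.1 p.2 := by
  have hω (i : Fin 3) := continuous_omf (lam := lam) (tau := tau) i x
  unfold gL
  fun_prop

theorem continuous_nablaSlope (x : Pt) :
    Continuous fun p : Pt × Pt => nablaSlope lam tau x p.1 p.2 := by
  have hω (i : Fin 3) := continuous_omf (lam := lam) (tau := tau) i x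
  unfold nablaSlope
  fun_prop

theorem continuousAt_fiberLaplacianScaled {h : Pt → ℝ} {x : Pt} (hu : ContDiff ℝ 2 u)
    (hh : ContDiff ℝ 2 h) (hx : mu lam x ≠ 0) (hnc : lf lam tau u x ≠ 0) :
    ContinuousAt (fiberLaplacianScaled lam tau u h x) 0 := by
  have hE := contDiffAt_uncurry_e2Scaled hu hnc 0
  have hEx : ContinuousAt (fun s => e2Scaled lam tau u s x) 0 :=
    hE.continuousAt.comp (f := fun s => (s, x)) (by fun_prop)
  have hdd : ContinuousAt (fun s => dd (e2Scaled lam tau u s) h x) 0 :=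
    (fderiv ℝ h x).continuous.continuousAt.comp hEx
  have hdd_dd := continuousAt_dd_dd hh hE
  have hnabla := continuousAt_nabla (tau := tau) 0 hx hEx hE
  have hslope : ContinuousAt
      (fun s => nablaSlope lam tau x (e2Scaled lam tau u s x) (e2Scaled lam tau u s x)) 0 :=
    (continuous_nablaSlope x).continuousAt.comp (f := fun s => (_, _)) (hEx.prodMk hEx)
  have hg := continuous_gL (lam := lam) (tau := tau) 0 x
  unfold fiberLaplacianScaled
  fun_prop

theorem fiberLaplacianScaled_zero {h : Pt → ℝ} {x : Pt} (hx : mu lam x ≠ 0)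
    (hnc : lf lam tau u x ≠ 0) :
    fiberLaplacianScaled lam tau u h x 0 = -dd (e1 lam tau u) (dd (e1 lam tau u) h) x
      - 2 * tau * X3u u x / lf lam tau u x * dd (e1 lam tau u) h x := by
  have hl2 : lf lam tau u x ^ 2 = pf lam tau u x ^ 2 + qf lam tau u x ^ 2 :=
    Real.sq_sqrt (by positivity)
  have hl0 : lLScaled lam tau u 0 x = lf lam tau u x := by simp [lLScaled, lf]
  simp only [fiberLaplacianScaled, nablaSlope, gL, e2Scaled, e1, pbar, qbar, hl0, omf_add,
    omf_sub, omf_smul, omf_X1 _ hx, omf_X2 _ hx, omf_X3, Matrix.cons_val, ne_eq,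
    OfNat.ofNat_ne_zero, not_false_eq_true, zero_pow, zero_mul, mul_zero, mul_one, zero_add,
    add_zero, sub_zero]
  field_simp
  linear_combination (2 * tau * X3u u x * dd (e1 lam tau u) h x) * hl2

end BCV

theorem statement12_general (lam tau : ℝ)
    (u : Pt → ℝ) (hu : ContDiff ℝ (⊤ : ℕ∞) u)
    (h : Pt → ℝ) (hh : ContDiff ℝ 2 h)
    (x : Pt) (hx : 0 < mu lam x) (hnc : lf lam tau u x ≠ 0) :
    Filter.Tendsto (fun L : ℝ =>
        -dd (e1 lam tau u) (dd (e1 lam tau u) h) x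
          - dd (e2 lam tau L u) (dd (e2 lam tau L u) h) x
          + gL lam tau L x (nabla lam tau L (e1 lam tau u) (e1 lam tau u) x)
              (e2 lam tau L u x) * dd (e2 lam tau L u) h x
          + gL lam tau L x (nabla lam tau L (e2 lam tau L u) (e2 lam tau L u) x)
              (e1 lam tau u x) * dd (e1 lam tau u) h x)
      Filter.atTop
      (nhds (-dd (e1 lam tau u) (dd (e1 lam tau u) h) x
        - 2 * tau * X3u u x / lf lam tau u x * dd (e1 lam tau u) h x)) := by
  have hlim := (continuousAt_fiberLaplacianScaled (hu.of_le (by norm_cast)) hh hx.ne' hnc).tendsto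
    |>.comp (tendsto_inv_atTop_zero.comp Real.tendsto_sqrt_atTop)
  rw [fiberLaplacianScaled_zero hx.ne' hnc] at hlim
  refine hlim.congr' ?_
  filter_upwards [eventually_gt_atTop 0] with L hL
  exact (fiberLaplacian_eq_fiberLaplacianScaled hL hx.ne').symm

/-- the sub-Riemannian limit of the fiber Laplacian
`Δ_F h = −ē₁(ē₁(h)) − ē₂(ē₂(h)) + g_L(∇^L_{ē₁}ē₁, ē₂)·ē₂(h) + g_L(∇^L_{ē₂}ē₂, ē₁)·ē₁(h)`
is `−ē₁(ē₁(h)) − (2τX₃u/l)·ē₁(h)`. -/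
theorem statement12 (lam tau : ℝ) (htau : 0 < tau)
    (u : Pt → ℝ) (hu : ContDiff ℝ (⊤ : ℕ∞) u)
    (h : Pt → ℝ) (hh : ContDiff ℝ 2 h)
    (x : Pt) (hx : 0 < mu lam x) (hnc : lf lam tau u x ≠ 0) :
    Filter.Tendsto (fun L : ℝ =>
        -dd (e1 lam tau u) (dd (e1 lam tau u) h) x
          - dd (e2 lam tau L u) (dd (e2 lam tau L u) h) x
          + gL lam tau L x (nabla lam tau L (e1 lam tau u) (e1 lam tau u) x)
              (e2 lam tau L u x) * dd (e2 lam tau L u) h x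
          + gL lam tau L x (nabla lam tau L (e2 lam tau L u) (e2 lam tau L u) x)
              (e1 lam tau u x) * dd (e1 lam tau u) h x)
      Filter.atTop
      (nhds (-dd (e1 lam tau u) (dd (e1 lam tau u) h) x
        - 2 * tau * X3u u x / lf lam tau u x * dd (e1 lam tau u) h x)) :=
  statement12_general lam tau u hu h hh x hx hnc
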